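/- Every invertible linear map of ℝ^8 that preserves the Spin(7)-form φ₀ is orthogonal: if A ∈ GL(8,ℝ) satisfies φ₀(Au, Av, Aw, Ax) = φ₀(u,v,w,x) for all u,v,w,x ∈ ℝ^8, then ⟨Au, Av⟩ = ⟨u, v⟩ for all u, v ∈ ℝ^8 (so the stabilizer of φ₀, the group Spin(7), is contained in O(8) and the Euclidean metric is determined by the Spin(7)-structure). -/

import Mathlib

open RealInnerProductSpace

noncomputable section

/-- Euclidean space `ℝ^8`. -/
abbrev E8 : Type := EuclideanSpace ℝ (Fin 8)

/-- The standard orthonormal basis vectors `e_0, …, e_7` of `ℝ^8`. -/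
def e (i : Fin 8) : E8 := EuclideanSpace.single i 1

/-- The elementary alternating 4-form `e^i ∧ e^j ∧ e^k ∧ e^l` evaluated on `(u,v,w,x)`. -/
def wedge4 (i j k l : Fin 8) (u v w x : E8) : ℝ :=
  Matrix.det !![u i, u j, u k, u l;
                v i, v j, v k, v l;
                w i, w j, w k, w l;
                x i, x j, x k, x l]

/-- The standard `Spin(7)`-form `φ₀` on `ℝ^8`:
`φ₀ = e^{0145}+e^{0167}+e^{2345}+e^{2367}+e^{0246}−e^{0257}−e^{1346}+e^{1357}
     −e^{0347}−e^{0356}−e^{1247}−e^{1256}+e^{0123}+e^{4567}`. -/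
def phi0 (u v w x : E8) : ℝ :=
    wedge4 0 1 4 5 u v w x + wedge4 0 1 6 7 u v w x + wedge4 2 3 4 5 u v w x
  + wedge4 2 3 6 7 u v w x + wedge4 0 2 4 6 u v w x - wedge4 0 2 5 7 u v w x
  - wedge4 1 3 4 6 u v w x + wedge4 1 3 5 7 u v w x - wedge4 0 3 4 7 u v w x
  - wedge4 0 3 5 6 u v w x - wedge4 1 2 4 7 u v w x - wedge4 1 2 5 6 u v w x
  + wedge4 0 1 2 3 u v w x + wedge4 4 5 6 7 u v w x

/-- The triple cross product `P : ℝ^8 × ℝ^8 × ℝ^8 → ℝ^8`, determined by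
`⟨P(u,v,w), x⟩ = φ₀(u,v,w,x)` for all `x ∈ ℝ^8`. -/
def P (u v w : E8) : E8 :=
  (WithLp.equiv 2 (Fin 8 → ℝ)).symm (fun i => phi0 u v w (e i))

/-!
Let `b` be an orthonormal eigenbasis of `AᵀA`, so that the vectors `A bᵢ` are orthogonal, and let
`cᵢ = A bᵢ / ‖A bᵢ‖`. For every orthonormal basis `β`, the weights `φ₀(β_i, β_j, β_k, β_l)²` are
symmetric in the four indices and satisfy `∑_{k,l} φ₀(β_i, β_j, β_k, β_l)² = 6 (1 - δᵢⱼ)`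
(a computation in the standard basis, transported to `β` by Parseval). Since `A` preserves `φ₀`,
the weights `t` of `b` and `s` of `c` are related by `s = t / (μᵢ μⱼ μₖ μₗ)` with `μᵢ = ‖A bᵢ‖²`.
Writing `θ = νᵢ + νⱼ + νₖ + νₗ` for `ν = log μ`, Gibbs' inequality `1 - θ ≤ exp (-θ)`, used for `t`
and for `s`, forces `∑ νᵢ = 0` and then `θ = 0` on the support of `t`. Hence
`0 = ∑ t θ² = 96 ∑ νᵢ²`, so `μ = 1` and `A` maps the orthonormal basis `b` to an orthonormal basis.
-/

theorem AlternatingMap.map_perm_sq {R M ι : Type*} [CommRing R] [AddCommGroup M] [Module R M]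
    [DecidableEq ι] [Fintype ι] (f : M [⋀^ι]→ₗ[R] R) (v : ι → M) (σ : Equiv.Perm ι) :
    f (v ∘ σ) ^ 2 = f v ^ 2 := by
  rw [f.map_perm]
  rcases Int.units_eq_one_or (Equiv.Perm.sign σ) with h | h <;> simp [h]

theorem Fintype.sum_fin_four_pi {ι M : Type*} [Fintype ι] [AddCommMonoid M]
    (F : (Fin 4 → ι) → M) :
    ∑ x, F x = ∑ i, ∑ j, ∑ k, ∑ l, F ![i, j, k, l] := by
  simp only [← (Fin.consEquiv fun _ => ι).sum_comp, Fintype.sum_prod_type, Fintype.sum_unique]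
  rfl

theorem Equiv.Perm.exists_apply_zero_eq_and_apply_one_eq {a c : Fin 4} (hac : a ≠ c) :
    ∃ σ : Equiv.Perm (Fin 4), σ 0 = a ∧ σ 1 = c := by
  revert a c
  decide

theorem exists_orthonormalBasis_pairwise_inner_map_eq_zero {𝕜 E : Type*} [RCLike 𝕜]
    [NormedAddCommGroup E] [InnerProductSpace 𝕜 E] [FiniteDimensional 𝕜 E] {n : ℕ}
    (hn : Module.finrank 𝕜 E = n) (A : E →ₗ[𝕜] E) :
    ∃ b : OrthonormalBasis (Fin n) 𝕜 E, Pairwise fun i j => inner 𝕜 (A (b i)) (A (b j)) = 0 := by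
  have hT := LinearMap.isSymmetric_adjoint_mul_self A
  refine ⟨hT.eigenvectorBasis hn, fun i j hij => ?_⟩
  dsimp only
  rw [← LinearMap.adjoint_inner_right, ← Module.End.mul_apply, hT.apply_eigenvectorBasis,
    inner_smul_right, (hT.eigenvectorBasis hn).orthonormal.2 hij, mul_zero]

section PairRegular

variable {ι : Type*} [Fintype ι]

/-- A weight on `ι⁴`, symmetric in the four slots, whose marginal on two slots is `b` off the
diagonal and `0` on it; the marginal is encoded by its integrals against all `h : ι → ι → ℝ`. -/
structure IsPairRegular (t : (Fin 4 → ι) → ℝ) (b : ℝ) : Prop where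
  comp_perm : ∀ x (σ : Equiv.Perm (Fin 4)), t (x ∘ σ) = t x
  sum_mul_apply_zero_apply_one :
    ∀ h : ι → ι → ℝ, ∑ x, t x * h (x 0) (x 1) = b * (∑ i, ∑ j, h i j - ∑ i, h i i)

variable {t : (Fin 4 → ι) → ℝ} {b : ℝ}

theorem sum_mul_comp_perm (ht : ∀ x (σ : Equiv.Perm (Fin 4)), t (x ∘ σ) = t x)
    (F : (Fin 4 → ι) → ℝ) (σ : Equiv.Perm (Fin 4)) :
    ∑ x, t x * F (x ∘ σ) = ∑ x, t x * F x :=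
  Fintype.sum_equiv (σ.symm.arrowCongr (Equiv.refl ι)) _ _ fun x => by
    rw [show σ.symm.arrowCongr (Equiv.refl ι) x = x ∘ σ from rfl, ht]

namespace IsPairRegular

theorem sum_eq (ht : IsPairRegular t b) :
    ∑ x, t x = b * (Fintype.card ι * (Fintype.card ι - 1)) := by
  simpa [mul_sub] using ht.sum_mul_apply_zero_apply_one fun _ _ => 1

theorem sum_mul_apply_apply (ht : IsPairRegular t b) {a c : Fin 4} (hac : a ≠ c)
    (h : ι → ι → ℝ) :
    ∑ x, t x * h (x a) (x c) = b * (∑ i, ∑ j, h i j - ∑ i, h i i) := by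
  obtain ⟨σ, rfl, rfl⟩ := Equiv.Perm.exists_apply_zero_eq_and_apply_one_eq hac
  rw [← sum_mul_comp_perm ht.comp_perm _ σ.symm]
  simpa using ht.sum_mul_apply_zero_apply_one h

theorem sum_mul_apply (ht : IsPairRegular t b) (a : Fin 4) (g : ι → ℝ) :
    ∑ x, t x * g (x a) = b * (Fintype.card ι - 1) * ∑ i, g i := by
  obtain ⟨c, hca⟩ := exists_ne a
  rw [ht.sum_mul_apply_apply hca.symm fun i _ => g i]
  simp only [Finset.sum_const, Finset.card_univ, nsmul_eq_mul, ← Finset.mul_sum]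
  ring

theorem sum_mul_sum_comp (ht : IsPairRegular t b) (ν : ι → ℝ) :
    ∑ x, t x * ∑ a, ν (x a) = 4 * (b * (Fintype.card ι - 1) * ∑ i, ν i) := by
  calc ∑ x, t x * ∑ a, ν (x a) = ∑ a, ∑ x, t x * ν (x a) := by
        simp_rw [Finset.mul_sum]
        exact Finset.sum_comm
    _ = _ := by simp [ht.sum_mul_apply]

theorem sum_mul_sum_comp_sq (ht : IsPairRegular t b) (ν : ι → ℝ) :
    ∑ x, t x * (∑ a, ν (x a)) ^ 2 =
      4 * (b * (Fintype.card ι - 1) * ∑ i, ν i ^ 2) +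
        12 * (b * ((∑ i, ν i) ^ 2 - ∑ i, ν i ^ 2)) := by
  have hslots : ∀ a c : Fin 4, ∑ x, t x * (ν (x a) * ν (x c)) =
      if a = c then b * (Fintype.card ι - 1) * ∑ i, ν i ^ 2
      else b * ((∑ i, ν i) ^ 2 - ∑ i, ν i ^ 2) := by
    intro a c
    split_ifs with hac
    · subst hac
      simp only [sq]
      exact ht.sum_mul_apply a fun i => ν i * ν i
    · rw [ht.sum_mul_apply_apply hac fun i j => ν i * ν j, sq, Finset.sum_mul_sum]
      simp only [sq]
  calc ∑ x, t x * (∑ a, ν (x a)) ^ 2 = ∑ a, ∑ c, ∑ x, t x * (ν (x a) * ν (x c)) := by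
        simp_rw [sq, Finset.sum_mul_sum, Finset.mul_sum]
        rw [Finset.sum_comm]
        exact Finset.sum_congr rfl fun _ _ => Finset.sum_comm
    _ = _ := by
        simp only [hslots, Fin.sum_univ_four, Fin.isValue, Fin.reduceEq, ↓reduceIte]
        ring

open Real

theorem sum_eq_zero_of_mul_exp (hb : 0 < b) (hι : 1 < Fintype.card ι) (ht0 : ∀ x, 0 ≤ t x)
    (ht : IsPairRegular t b) {ν : ι → ℝ}
    (hs : IsPairRegular (fun x => t x * exp (-∑ a, ν (x a))) b) :
    ∑ i, ν i = 0 := by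
  set θ : (Fin 4 → ι) → ℝ := fun x => ∑ a, ν (x a)
  have hmass : ∑ x, (t x - t x * exp (-θ x)) = 0 := by
    rw [Finset.sum_sub_distrib, ht.sum_eq, hs.sum_eq, sub_self]
  -- Gibbs' inequality for `t` relative to `s`, and for `s` relative to `t`.
  have hle : ∑ x, (t x - t x * exp (-θ x)) ≤ ∑ x, t x * θ x :=
    Finset.sum_le_sum fun x _ => by nlinarith [one_sub_le_exp_neg (θ x), ht0 x]
  have hge : ∑ x, t x * exp (-θ x) * θ x ≤ ∑ x, (t x - t x * exp (-θ x)) := by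
    refine Finset.sum_le_sum fun x _ => ?_
    have h := mul_le_mul_of_nonneg_left (add_one_le_exp (θ x)) (exp_pos (-θ x)).le
    rw [← exp_add, neg_add_cancel, exp_zero] at h
    nlinarith [ht0 x]
  rw [hmass, ht.sum_mul_sum_comp] at hle
  rw [hmass, hs.sum_mul_sum_comp] at hge
  have hc : 0 < b * (Fintype.card ι - 1) := mul_pos hb (by norm_num; exact_mod_cast hι)
  nlinarith

theorem eq_zero_of_mul_exp (hb : 0 < b) (hι : 4 < Fintype.card ι) (ht0 : ∀ x, 0 ≤ t x)
    (ht : IsPairRegular t b) {ν : ι → ℝ}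
    (hs : IsPairRegular (fun x => t x * exp (-∑ a, ν (x a))) b) :
    ν = 0 := by
  have hsum := ht.sum_eq_zero_of_mul_exp hb (by omega) ht0 hs
  set θ : (Fin 4 → ι) → ℝ := fun x => ∑ a, ν (x a)
  have hgap : ∀ x, 0 ≤ t x * θ x - (t x - t x * exp (-θ x)) := fun x => by
    nlinarith [one_sub_le_exp_neg (θ x), ht0 x]
  have hgap_sum : ∑ x, (t x * θ x - (t x - t x * exp (-θ x))) = 0 := by
    rw [Finset.sum_sub_distrib, Finset.sum_sub_distrib, ht.sum_eq, hs.sum_eq,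
      ht.sum_mul_sum_comp, hsum]
    ring
  -- Equality in `1 - θ ≤ exp (-θ)` holds only at `θ = 0`.
  have hsupp : ∀ x, t x * θ x ^ 2 = 0 := by
    intro x
    rcases eq_or_ne (θ x) 0 with hθ | hθ
    · simp [hθ]
    · have hx : t x * θ x - (t x - t x * exp (-θ x)) = 0 :=
        congrFun ((Fintype.sum_eq_zero_iff_of_nonneg hgap).mp hgap_sum) x
      have ht_zero : t x = 0 := by
        by_contra hne
        have := mul_lt_mul_of_pos_left (one_sub_lt_exp_neg hθ) ((ht0 x).lt_of_ne' hne)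
        linarith
      simp [ht_zero]
  have hquad := ht.sum_mul_sum_comp_sq ν
  rw [Fintype.sum_eq_zero _ hsupp, hsum] at hquad
  have hsq : ∑ i, ν i ^ 2 = 0 := by
    have : (0 : ℝ) < b * (Fintype.card ι - 4) := mul_pos hb (by norm_num; exact_mod_cast hι)
    nlinarith [Finset.sum_nonneg fun i (_ : i ∈ Finset.univ) => sq_nonneg (ν i)]
  funext i
  simpa using congrFun ((Fintype.sum_eq_zero_iff_of_nonneg fun i => sq_nonneg (ν i)).mp hsq) i

theorem eq_one_of_div_prod (hb : 0 < b) (hι : 4 < Fintype.card ι) (ht0 : ∀ x, 0 ≤ t x)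
    (ht : IsPairRegular t b) {μ : ι → ℝ} (hμ : ∀ i, 0 < μ i)
    (hs : IsPairRegular (fun x => t x / ∏ a, μ (x a)) b) (i : ι) :
    μ i = 1 := by
  have hexp : ∀ x : Fin 4 → ι, t x * exp (-∑ a, log (μ (x a))) = t x / ∏ a, μ (x a) := by
    intro x
    rw [exp_neg, exp_sum, div_eq_mul_inv]
    simp only [exp_log (hμ _)]
  have hν := ht.eq_zero_of_mul_exp hb hι ht0 (ν := fun i => log (μ i)) (by simpa only [hexp])
  rw [← exp_log (hμ i), congrFun hν i, Pi.zero_apply, exp_zero]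

end IsPairRegular

end PairRegular

theorem e_apply (m i : Fin 8) : e m i = if i = m then 1 else 0 := by
  simp [e]

theorem P_apply (u v w : E8) (m : Fin 8) : P u v w m = phi0 u v w (e m) := rfl

theorem wedge4_eq_laplace (i j k l : Fin 8) (u v w x : E8) :
    wedge4 i j k l u v w x =
      (u i * v j - u j * v i) * (w k * x l - w l * x k)
        - (u i * v k - u k * v i) * (w j * x l - w l * x j)
        + (u i * v l - u l * v i) * (w j * x k - w k * x j)
        + (u j * v k - u k * v j) * (w i * x l - w l * x i)
        - (u j * v l - u l * v j) * (w i * x k - w k * x i)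
        + (u k * v l - u l * v k) * (w i * x j - w j * x i) := by
  simp [wedge4, Matrix.det_succ_row_zero, Fin.sum_univ_succ, Fin.succAbove]
  ring

theorem sum_sq_phi0_e_e (w x : E8) :
    ∑ k, ∑ l, phi0 w x (e k) (e l) ^ 2 = 6 * (⟪w, w⟫ * ⟪x, x⟫ - ⟪w, x⟫ ^ 2) := by
  simp only [PiLp.inner_apply, RCLike.inner_apply, conj_trivial, Fin.sum_univ_eight, phi0,
    wedge4_eq_laplace, e_apply, Fin.reduceEq, if_true, if_false, mul_zero, mul_one, sub_zero,
    zero_sub, add_zero, zero_add, sub_self, neg_zero]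
  ring

def proj4 (i j k l : Fin 8) : E8 →ₗ[ℝ] Fin 4 → ℝ :=
  LinearMap.pi fun c => (EuclideanSpace.proj (![i, j, k, l] c) : E8 →L[ℝ] ℝ).toLinearMap

def wedge4Form (i j k l : Fin 8) : E8 [⋀^Fin 4]→ₗ[ℝ] ℝ :=
  Matrix.detRowAlternating.compLinearMap (proj4 i j k l)

theorem wedge4Form_apply (i j k l : Fin 8) (v : Fin 4 → E8) :
    wedge4Form i j k l v = wedge4 i j k l (v 0) (v 1) (v 2) (v 3) := by
  change Matrix.det (Matrix.of fun r => proj4 i j k l (v r)) = _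
  congr 1
  ext r c
  fin_cases r <;> fin_cases c <;> rfl

def phi0Form : E8 [⋀^Fin 4]→ₗ[ℝ] ℝ :=
    wedge4Form 0 1 4 5 + wedge4Form 0 1 6 7 + wedge4Form 2 3 4 5
  + wedge4Form 2 3 6 7 + wedge4Form 0 2 4 6 - wedge4Form 0 2 5 7
  - wedge4Form 1 3 4 6 + wedge4Form 1 3 5 7 - wedge4Form 0 3 4 7
  - wedge4Form 0 3 5 6 - wedge4Form 1 2 4 7 - wedge4Form 1 2 5 6
  + wedge4Form 0 1 2 3 + wedge4Form 4 5 6 7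

theorem phi0Form_apply (v : Fin 4 → E8) : phi0Form v = phi0 (v 0) (v 1) (v 2) (v 3) := by
  simp only [phi0Form, AlternatingMap.add_apply, AlternatingMap.sub_apply, wedge4Form_apply, phi0]

theorem phi0_sq_swap_right (u v w x : E8) : phi0 u v x w ^ 2 = phi0 u v w x ^ 2 := by
  have := phi0Form.map_perm_sq ![u, v, w, x] (Equiv.swap 2 3)
  rwa [phi0Form_apply, phi0Form_apply] at this

theorem inner_P (u v w x : E8) : ⟪P u v w, x⟫ = phi0 u v w x := by
  let f := phi0Form.toMultilinearMap.toLinearMap ![u, v, w, 0] 3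
  have hf : ∀ y, f y = phi0 u v w y := fun y => by
    simp only [f, MultilinearMap.toLinearMap_apply, AlternatingMap.coe_multilinearMap,
      phi0Form_apply]
    rfl
  rw [← hf, ← innerₛₗ_apply_apply (𝕜 := ℝ)]
  congr 1
  refine (EuclideanSpace.basisFun (Fin 8) ℝ).toBasis.ext fun m => ?_
  simp [hf, EuclideanSpace.inner_single_right, P_apply, e]

theorem sum_sq_phi0_orthonormalBasis {ι : Type*} [Fintype ι] (β : OrthonormalBasis ι ℝ E8)
    (u v w : E8) : ∑ l, phi0 u v w (β l) ^ 2 = ‖P u v w‖ ^ 2 := by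
  simp_rw [← inner_P]
  exact β.sum_sq_inner_left _

theorem sum_sum_sq_phi0_orthonormalBasis {ι : Type*} [Fintype ι] (β : OrthonormalBasis ι ℝ E8)
    (w x : E8) : ∑ k, ∑ l, phi0 w x (β k) (β l) ^ 2 = 6 * (⟪w, w⟫ * ⟪x, x⟫ - ⟪w, x⟫ ^ 2) := by
  have he := sum_sq_phi0_orthonormalBasis (EuclideanSpace.basisFun (Fin 8) ℝ)
  simp only [EuclideanSpace.basisFun_apply] at he
  calc ∑ k, ∑ l, phi0 w x (β k) (β l) ^ 2 = ∑ k, ∑ l, phi0 w x (β k) (e l) ^ 2 := by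
        simp_rw [sum_sq_phi0_orthonormalBasis β, ← he, e]
    _ = ∑ l, ∑ k, phi0 w x (e l) (β k) ^ 2 := by
        rw [Finset.sum_comm]
        simp_rw [phi0_sq_swap_right]
    _ = ∑ l, ∑ k, phi0 w x (e l) (e k) ^ 2 := by
        simp_rw [sum_sq_phi0_orthonormalBasis β, ← he, e]
    _ = _ := sum_sq_phi0_e_e w x

theorem isPairRegular_phi0Form_sq (β : OrthonormalBasis (Fin 8) ℝ E8) :
    IsPairRegular (fun x => phi0Form (β ∘ x) ^ 2) 6 where
  comp_perm x σ := phi0Form.map_perm_sq (β ∘ x) σ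
  sum_mul_apply_zero_apply_one h := by
    rw [Fintype.sum_fin_four_pi]
    simp only [phi0Form_apply, Function.comp_apply, Matrix.cons_val]
    simp_rw [← Finset.sum_mul, sum_sum_sq_phi0_orthonormalBasis,
      orthonormal_iff_ite.mp β.orthonormal]
    simp [mul_sub, sub_mul, Finset.sum_sub_distrib, Finset.mul_sum, ite_mul]

/-- Every invertible linear map of `ℝ^8` preserving the `Spin(7)`-form `φ₀` is
orthogonal: the stabilizer of `φ₀` lies in `O(8)`. -/
theorem stabilizer_phi0_subset_orthogonal (A : E8 ≃ₗ[ℝ] E8)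
    (hA : ∀ u v w x : E8, phi0 (A u) (A v) (A w) (A x) = phi0 u v w x) :
    ∀ u v : E8, ⟪A u, A v⟫ = ⟪u, v⟫ := by
  have hAφ : ∀ v : Fin 4 → E8, phi0Form (A ∘ v) = phi0Form v := fun v => by
    simp only [phi0Form_apply, Function.comp_apply, hA]
  obtain ⟨b, hb⟩ :=
    exists_orthonormalBasis_pairwise_inner_map_eq_zero finrank_euclideanSpace_fin (A : E8 →ₗ[ℝ] E8)
  have hAb : ∀ i, A (b i) ≠ 0 := fun i => by simpa using b.orthonormal.ne_zero i
  let c := InnerProductSpace.gramSchmidtOrthonormalBasis (𝕜 := ℝ)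
    (finrank_euclideanSpace_fin.trans (Fintype.card_fin 8).symm) (A ∘ b)
  have hc : ∀ i, c i = ‖A (b i)‖⁻¹ • A (b i) := fun i =>
    InnerProductSpace.gramSchmidtOrthonormalBasis_apply_of_orthogonal _ hb (hAb i)
  have hcb : ∀ x, phi0Form (c ∘ x) ^ 2 = phi0Form (b ∘ x) ^ 2 / ∏ a, ‖A (b (x a))‖ ^ 2 := by
    intro x
    rw [show c ∘ x = fun a => ‖A (b (x a))‖⁻¹ • A (b (x a)) from funext fun a => hc _,
      phi0Form.map_smul_univ, smul_eq_mul, show (fun a => A (b (x a))) = A ∘ (b ∘ x) from rfl,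
      hAφ, mul_pow, Finset.prod_pow, Finset.prod_inv_distrib, inv_pow, div_eq_inv_mul]
  have hnorm : ∀ i, ‖A (b i)‖ ^ 2 = 1 :=
    (isPairRegular_phi0Form_sq b).eq_one_of_div_prod (by norm_num) (by simp)
      (fun _ => sq_nonneg _) (fun i => pow_pos (norm_pos_iff.mpr (hAb i)) 2)
      (by simpa only [hcb] using isPairRegular_phi0Form_sq c)
  have hAb_on : Orthonormal ℝ (A ∘ b) :=
    ⟨fun i => (pow_eq_one_iff_of_nonneg (norm_nonneg _) two_ne_zero).mp (hnorm i), hb⟩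
  exact (A.toLinearMap.isometryOfOrthonormal (v := b.toBasis) (by simp [b.orthonormal])
    (by simp [hAb_on])).inner_map_map
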